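/- arXiv:2108.00531 — 2 statements merged into one kernel-verified Lean document; each statement's English description precedes it below -/
import Mathlib

section
/- A monomial ideal I in K[x_1,...,x_n] is componentwise polymatroidal if and only if the following exchange condition holds: for all monomials u, v in I with deg(u) ≤ deg(v) and u not dividing v, and for every index i with deg_{x_i}(v) > deg_{x_i}(u), there exists an index j with deg_{x_j}(v) < deg_{x_j}(u) such that x_j·(v/x_i) ∈ I. -/
/-- A monomial in `K[x_1,...,x_n]` is identified with its exponent vector. -/
abbrev Mon (n : ℕ) := Fin n → ℕ

/-- Total degree of a monomial. -/
def degree {n : ℕ} (u : Mon n) : ℕ := ∑ i, u i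

/-- A monomial ideal is identified with the set of exponent vectors of the monomials it
contains; this set is closed under multiplication by monomials. -/
def IsMonomialIdeal {n : ℕ} (I : Set (Mon n)) : Prop :=
  ∀ u ∈ I, ∀ w : Mon n, u + w ∈ I

/-- The minimal monomial generating set `G(I)` of a monomial ideal: monomials of `I`
minimal with respect to divisibility (pointwise `≤` of exponent vectors). -/
def minGens {n : ℕ} (I : Set (Mon n)) : Set (Mon n) :=
  {u | u ∈ I ∧ ∀ v ∈ I, v ≤ u → v = u}

/-- `exch v i j` is the exponent vector of `x_j * (v / x_i)` (for `i ≠ j`). -/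
def exch {n : ℕ} (v : Mon n) (i j : Fin n) : Mon n :=
  fun k => if k = i then v k - 1 else if k = j then v k + 1 else v k

/-- `component I d` is the ideal `I_⟨d⟩` generated by the degree-`d` monomials of `I`. -/
def component {n : ℕ} (I : Set (Mon n)) (d : ℕ) : Set (Mon n) :=
  {w | ∃ u ∈ I, degree u = d ∧ u ≤ w}

/-- `I` is generated in a single degree. -/
def GeneratedInSingleDegree {n : ℕ} (I : Set (Mon n)) : Prop :=
  ∃ d, ∀ u ∈ minGens I, degree u = d

/-- A polymatroidal ideal: generated in a single degree and its generators satisfy the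
exchange property. -/
def IsPolymatroidal {n : ℕ} (I : Set (Mon n)) : Prop :=
  GeneratedInSingleDegree I ∧
  ∀ u ∈ minGens I, ∀ v ∈ minGens I, ∀ i : Fin n, v i < u i →
    ∃ j : Fin n, u j < v j ∧ exch u i j ∈ I

/-- Componentwise polymatroidal: each graded component ideal `I_⟨d⟩` is polymatroidal. -/
def ComponentwisePolymatroidal {n : ℕ} (I : Set (Mon n)) : Prop :=
  ∀ d : ℕ, IsPolymatroidal (component I d)

/-- Non-pure dual exchange property: for `u, v ∈ G(I)` with `deg u ≤ deg v` and
`deg_{x_i} v < deg_{x_i} u` there is `j` with `deg_{x_j} v > deg_{x_j} u` and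
`x_i * (v / x_j) ∈ I`. -/
def NonPureDualExchange {n : ℕ} (I : Set (Mon n)) : Prop :=
  ∀ u ∈ minGens I, ∀ v ∈ minGens I, degree u ≤ degree v →
    ∀ i : Fin n, v i < u i → ∃ j : Fin n, u j < v j ∧ exch v j i ∈ I

/-- Non-pure exchange property: for `u, v ∈ G(I)` with `deg u ≤ deg v` and
`deg_{x_i} v > deg_{x_i} u` there is `j` with `deg_{x_j} v < deg_{x_j} u` and
`x_j * (v / x_i) ∈ I`. -/
def NonPureExchange {n : ℕ} (I : Set (Mon n)) : Prop :=
  ∀ u ∈ minGens I, ∀ v ∈ minGens I, degree u ≤ degree v →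
    ∀ i : Fin n, u i < v i → ∃ j : Fin n, v j < u j ∧ exch v i j ∈ I

/-- The monomial ideal generated by a set `G` of monomials. -/
def genBy {n : ℕ} (G : Set (Mon n)) : Set (Mon n) := {w | ∃ u ∈ G, u ≤ w}

/-- The product of two monomial ideals (as sets of monomials). -/
def mulIdeal {n : ℕ} (I J : Set (Mon n)) : Set (Mon n) :=
  {w | ∃ u ∈ I, ∃ v ∈ J, w = u + v}

/-- The product of a monomial ideal with the monomial `u`. -/
def mulMon {n : ℕ} (u : Mon n) (I : Set (Mon n)) : Set (Mon n) :=
  (fun v => u + v) '' I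

/-- Strong exchange property: for all generators `u, v` and all `i, j` with
`deg_{x_i} u > deg_{x_i} v` and `deg_{x_j} u < deg_{x_j} v`, `x_j * (u / x_i) ∈ I`. -/
def StrongExchange {n : ℕ} (I : Set (Mon n)) : Prop :=
  ∀ u ∈ minGens I, ∀ v ∈ minGens I, ∀ i j : Fin n,
    v i < u i → u j < v j → exch u i j ∈ I

/-- The Veronese type ideal `I_{(d; a_1,...,a_n)}`: generated by all monomials of
degree `d` with `deg_{x_i} ≤ a i` for all `i`. -/
def veronese (n d : ℕ) (a : Fin n → ℕ) : Set (Mon n) :=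
  {w | ∃ u : Mon n, degree u = d ∧ (∀ i, u i ≤ a i) ∧ u ≤ w}

/-- A list of monomials is an admissible order if each colon ideal
`(u_1,...,u_{i-1}) : u_i` is generated by a subset `S` of the variables. -/
def AdmissibleOrder {n : ℕ} (L : List (Mon n)) : Prop :=
  ∀ i : Fin L.length, ∃ S : Set (Fin n),
    ∀ w : Mon n, (w + L.get i ∈ genBy {u | u ∈ L.take i.1}) ↔ ∃ k ∈ S, 1 ≤ w k

/-- `I` has linear quotients: some ordering of `G(I)` is admissible. -/
def HasLinearQuotients {n : ℕ} (I : Set (Mon n)) : Prop :=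
  ∃ L : List (Mon n), L.Nodup ∧ (∀ u, u ∈ L ↔ u ∈ minGens I) ∧ AdmissibleOrder L

/-- `I` can be extended by linear quotients to `J`: `G(I) ⊆ G(J)` and the elements of
`G(J) \ G(I)` can be ordered `v_1,...,v_m` such that each colon ideal
`(G(I), v_1,...,v_i) : v_{i+1}` is generated by a subset of the variables. -/
def ExtendsByLinearQuotients {n : ℕ} (I J : Set (Mon n)) : Prop :=
  I ⊆ J ∧ minGens I ⊆ minGens J ∧
  ∃ L : List (Mon n), L.Nodup ∧ (∀ u, u ∈ L ↔ u ∈ minGens J ∧ u ∉ minGens I) ∧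
    ∀ i : Fin L.length, ∃ S : Set (Fin n),
      ∀ w : Mon n,
        (w + L.get i ∈ genBy (minGens I ∪ {u | u ∈ L.take i.1})) ↔ ∃ k ∈ S, 1 ≤ w k

/-- The minimal generators of `I ⊆ K[x,y]` are `u_i = x^{a i} y^{b i}`, `i = 0,...,m`,
with `a` strictly decreasing, `b` strictly increasing, `a m = 0` and `b 0 = 0`
(so `I` is `(x,y)`-primary). -/
def yxTightGens (m : ℕ) (a b : ℕ → ℕ) (I : Set (Mon 2)) : Prop :=
  (∀ i k : ℕ, i ≤ m → k ≤ m → i < k → a k < a i ∧ b i < b k) ∧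
  a m = 0 ∧ b 0 = 0 ∧
  minGens I = {u | ∃ i ≤ m, u = ![a i, b i]}

/-- `I` is `x`-tight in `[0, r]`: the `x`-exponents of the generators are exactly
`r, r-1, ..., 1, 0` (i.e. `a (r - i) = i`). -/
def xTight (I : Set (Mon 2)) (r : ℕ) : Prop :=
  ∃ b : ℕ → ℕ, yxTightGens r (fun i => r - i) b I

/-- `I` is `y`-tight in `[0, s]`: the `y`-exponents of the generators are exactly
`0, 1, ..., s`. -/
def yTight (I : Set (Mon 2)) (s : ℕ) : Prop :=
  ∃ a : ℕ → ℕ, yxTightGens s a (fun i => i) I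

/-- `I` is `yx`-tight: there is `0 ≤ j ≤ m` with `b i = i` for `i = 0,...,j` and
`a (m - i) = i` for `i = 0,...,m-j`. -/
def yxTight (I : Set (Mon 2)) : Prop :=
  ∃ (m : ℕ) (a b : ℕ → ℕ), yxTightGens m a b I ∧
    ∃ j ≤ m, (∀ i ≤ j, b i = i) ∧ ∀ i ≤ m - j, a (m - i) = i

/-- Powers of a monomial ideal. -/
def powIdeal {n : ℕ} (I : Set (Mon n)) : ℕ → Set (Mon n)
  | 0 => Set.univ
  | k + 1 => mulIdeal (powIdeal I k) I

/-!
Both conditions reduce to the exchange property between monomials of `I` of equal degree,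
because the minimal generators of `I_⟨d⟩` are exactly the degree-`d` monomials of `I`.
For the forward direction, given `u, v` with `deg u ≤ deg v` and `u ∤ v`, choose a divisor
`w` of `v / (u x_i)` of degree `deg v - deg u`; such a `w` exists because `u ∤ v` makes
`deg (v / u) > deg v - deg u` (with truncated exponents). Exchanging between `v` and `u w`,
which have equal degree, gives an index `j` with `v_j < u_j + w_j`, hence `v_j < u_j`.
-/

section Degree

variable {n : ℕ}

lemma degree_add (u w : Mon n) : degree (u + w) = degree u + degree w :=
  Finset.sum_add_distrib

lemma degree_single (i : Fin n) (k : ℕ) : degree (Pi.single i k : Mon n) = k := by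
  simp [degree]

lemma degree_le_degree {u v : Mon n} (h : u ≤ v) : degree u ≤ degree v :=
  Finset.sum_le_sum fun k _ => h k

lemma degree_lt_degree {u v : Mon n} (h : u < v) : degree u < degree v := by
  obtain ⟨hle, k, hk⟩ := Pi.lt_def.1 h
  exact Finset.sum_lt_sum (fun m _ => hle m) ⟨k, Finset.mem_univ k, hk⟩

lemma eq_of_le_of_degree_le {u v : Mon n} (h : u ≤ v) (hd : degree v ≤ degree u) : u = v := by
  by_contra hne
  exact (degree_lt_degree (lt_of_le_of_ne h hne)).not_ge hd

lemma exch_add_single {v : Mon n} {i j : Fin n} (hij : i ≠ j) (hv : 1 ≤ v i) :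
    exch v i j + Pi.single i 1 = v + Pi.single j 1 := by
  funext k
  rcases eq_or_ne k i with rfl | hki
  · simp only [Pi.add_apply, exch, ↓reduceIte, Pi.single_eq_same, ne_eq, hij, not_false_eq_true,
      Pi.single_eq_of_ne, add_zero]
    omega
  · rcases eq_or_ne k j with rfl | hkj
    · simp [exch, hki]
    · simp [exch, hki, hkj]

lemma degree_exch {v : Mon n} {i j : Fin n} (hij : i ≠ j) (hv : 1 ≤ v i) :
    degree (exch v i j) = degree v := by
  have h := congrArg degree (exch_add_single hij hv)
  simp only [degree_add, degree_single] at h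
  omega

lemma exists_le_degree_eq {c : Mon n} {d : ℕ} (h : d ≤ degree c) :
    ∃ w ≤ c, degree w = d := by
  induction d with
  | zero => exact ⟨0, fun _ => Nat.zero_le _, by simp [degree]⟩
  | succ d ih =>
    obtain ⟨w, hwc, hwd⟩ := ih (by omega)
    obtain ⟨k, hk⟩ : ∃ k, w k < c k := by
      by_contra! hcw
      have := degree_le_degree (show c ≤ w from hcw)
      omega
    refine ⟨w + Pi.single k 1, fun m => ?_, by rw [degree_add, degree_single, hwd]⟩
    rcases eq_or_ne m k with rfl | hmk
    · simpa using hk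
    · simpa [hmk] using hwc m

end Degree

section Component

variable {n : ℕ} {I : Set (Mon n)} {d : ℕ}

lemma mem_component_iff {w : Mon n} (hw : degree w = d) : w ∈ component I d ↔ w ∈ I := by
  constructor
  · rintro ⟨u, hu, hud, hle⟩
    rwa [eq_of_le_of_degree_le hle (by omega)] at hu
  · exact fun h => ⟨w, h, hw, le_rfl⟩

lemma minGens_component : minGens (component I d) = {u | u ∈ I ∧ degree u = d} := by
  ext w
  constructor
  · rintro ⟨⟨u, hu, hud, hle⟩, hmin⟩
    obtain rfl := hmin u ⟨u, hu, hud, le_rfl⟩ hle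
    exact ⟨hu, hud⟩
  · rintro ⟨hw, hwd⟩
    refine ⟨⟨w, hw, hwd, le_rfl⟩, fun v ⟨u, _, hud, huv⟩ hvw => ?_⟩
    obtain rfl := eq_of_le_of_degree_le (huv.trans hvw) (by omega)
    exact le_antisymm hvw huv

end Component

def EqualDegreeExchange {n : ℕ} (I : Set (Mon n)) : Prop :=
  ∀ u ∈ I, ∀ v ∈ I, degree u = degree v → ∀ i : Fin n, v i < u i →
    ∃ j : Fin n, u j < v j ∧ exch u i j ∈ I

section Exchange

variable {n : ℕ} {I : Set (Mon n)}

theorem componentwisePolymatroidal_iff_equalDegreeExchange :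
    ComponentwisePolymatroidal I ↔ EqualDegreeExchange I := by
  have degree_exch_of_lt {u v : Mon n} {i j : Fin n} (hi : v i < u i) (hj : u j < v j) :
      degree (exch u i j) = degree u :=
    degree_exch (by rintro rfl; omega) (by omega)
  constructor
  · intro h u hu v hv hdeg i hi
    have hmin : ∀ w ∈ I, degree w = degree u → w ∈ minGens (component I (degree u)) :=
      fun w hw hwd => minGens_component ▸ ⟨hw, hwd⟩
    obtain ⟨j, hj, hmem⟩ := (h (degree u)).2 u (hmin u hu rfl) v (hmin v hv hdeg.symm) i hi
    exact ⟨j, hj, (mem_component_iff (degree_exch_of_lt hi hj)).1 hmem⟩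
  · intro hP d
    refine ⟨⟨d, fun u hu => (minGens_component ▸ hu).2⟩, fun u hu v hv i hi => ?_⟩
    rw [minGens_component] at hu hv
    obtain ⟨j, hj, hmem⟩ := hP u hu.1 v hv.1 (hu.2.trans hv.2.symm) i hi
    exact ⟨j, hj, (mem_component_iff ((degree_exch_of_lt hi hj).trans hu.2)).2 hmem⟩

theorem EqualDegreeExchange.exchange_of_degree_le (hI : IsMonomialIdeal I) (hP : EqualDegreeExchange I)
    {u v : Mon n} (hu : u ∈ I) (hv : v ∈ I) (hdeg : degree u ≤ degree v) (hnle : ¬ u ≤ v)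
    {i : Fin n} (hi : u i < v i) : ∃ j : Fin n, v j < u j ∧ exch v i j ∈ I := by
  obtain ⟨k, hk⟩ : ∃ k, v k < u k := by
    simpa [Pi.le_def] using hnle
  set c : Mon n := v - u - Pi.single i 1 with hc
  have hc_add : c + Pi.single i 1 = v - u := by
    funext m
    rcases eq_or_ne m i with rfl | hmi
    · simp only [hc, Pi.add_apply, Pi.sub_apply, Pi.single_eq_same]
      omega
    · simp [hc, hmi]
  have hv_lt : v < v - u + u :=
    Pi.lt_def.2 ⟨fun _ => le_tsub_add, k, by simp only [Pi.add_apply, Pi.sub_apply]; omega⟩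
  have hcd : degree v - degree u ≤ degree c := by
    have h₁ := degree_lt_degree hv_lt
    have h₂ := congrArg degree hc_add
    rw [degree_add] at h₁ h₂
    rw [degree_single] at h₂
    omega
  obtain ⟨w, hwc, hwd⟩ := exists_le_degree_eq hcd
  have hw : ∀ m, w m ≤ v m - u m := fun m => (hwc m).trans tsub_le_self
  have hui : (u + w) i < v i := by
    have := hwc i
    simp only [hc, Pi.sub_apply, Pi.single_eq_same] at this
    simp only [Pi.add_apply]
    omega
  obtain ⟨j, hj, hmem⟩ := hP v hv (u + w) (hI u hu w) (by rw [degree_add]; omega) i hui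
  refine ⟨j, ?_, hmem⟩
  have := hw j
  simp only [Pi.add_apply] at hj
  omega

end Exchange

/-- a monomial ideal is componentwise polymatroidal iff for all `u, v ∈ I`
with `deg u ≤ deg v` and `u ∤ v`, for every `i` with `deg_{x_i} v > deg_{x_i} u` there is
`j` with `deg_{x_j} v < deg_{x_j} u` and `x_j * (v / x_i) ∈ I`. -/
theorem stmt_0 {n : ℕ} (I : Set (Mon n)) (hI : IsMonomialIdeal I) :
    ComponentwisePolymatroidal I ↔
      (∀ u ∈ I, ∀ v ∈ I, degree u ≤ degree v → ¬ u ≤ v →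
        ∀ i : Fin n, u i < v i → ∃ j : Fin n, v j < u j ∧ exch v i j ∈ I) := by
  rw [componentwisePolymatroidal_iff_equalDegreeExchange]
  refine ⟨fun hP u hu v hv hdeg hnle i hi => hP.exchange_of_degree_le hI hu hv hdeg hnle hi,
    fun hQ u hu v hv hdeg i hi => hQ v hv u hu hdeg.ge (fun hvu => ?_) i hi⟩
  obtain rfl := eq_of_le_of_degree_le hvu hdeg.le
  exact lt_irrefl _ hi
end

section
/- Let I ⊂ K[x,y] be a componentwise polymatroidal ideal with minimal generators u_0,...,u_m ordered by strictly decreasing x-degree, and let d_i = deg(u_i). Then the sequence (d_0,...,d_m) is unimodal in the valley sense: there exists 0 ≤ j ≤ m such that d_0 ≥ d_1 ≥ ... ≥ d_j ≤ d_{j+1} ≤ ... ≤ d_m. -/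
/-!
Fix a degree `D` and let `I_D` be the set of `t` with `x^t y^(D-t) ∈ I`. In two variables the
exchange property of the polymatroidal ideal `I_⟨D⟩` can only trade an `x` for a `y`, so `I_D`
is an interval. Now suppose `deg u_p < deg u_q > deg u_r` with `p < q < r`, and take
`D = deg u_q - 1`. Then `a_p, a_r ∈ I_D` and `a_r < a_q < a_p`, hence `x^(a_q) y^(b_q - 1) ∈ I`;
but no generator divides this monomial. A sequence without such strict peaks is a valley:
it decreases up to any of its minima and increases afterwards.
-/

lemma degree_pair (s t : ℕ) : degree (![s, t] : Mon 2) = s + t := by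
  simp [degree, Fin.sum_univ_two]

lemma pair_le_pair {s t s' t' : ℕ} (hs : s ≤ s') (ht : t ≤ t') :
    (![s, t] : Mon 2) ≤ ![s', t'] := by
  intro k
  fin_cases k <;> simpa

lemma eq_of_le_of_degree_eq {n : ℕ} {v w : Mon n} (hle : v ≤ w) (hd : degree v = degree w) :
    v = w :=
  funext ((Finset.sum_eq_sum_iff_of_le fun i _ => hle i).1 hd · (Finset.mem_univ _))

lemma IsMonomialIdeal.mem_of_le {n : ℕ} {I : Set (Mon n)} (hI : IsMonomialIdeal I)
    {u w : Mon n} (hu : u ∈ I) (hle : u ≤ w) : w ∈ I := by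
  simpa [add_tsub_cancel_of_le hle] using hI u hu (w - u)

lemma exists_mem_minGens_le {n : ℕ} {I : Set (Mon n)} {w : Mon n} (hw : w ∈ I) :
    ∃ u ∈ minGens I, u ≤ w := by
  obtain ⟨u, ⟨hu, huw⟩, hmin⟩ := wellFounded_lt.has_min {v | v ∈ I ∧ v ≤ w} ⟨w, hw, le_rfl⟩
  refine ⟨u, ⟨hu, fun v hv hvu => ?_⟩, huw⟩
  by_contra hne
  exact hmin v ⟨hv, hvu.trans huw⟩ (lt_of_le_of_ne hvu hne)

lemma mem_minGens_component {n : ℕ} {I : Set (Mon n)} {u : Mon n} (hu : u ∈ I) :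
    u ∈ minGens (component I (degree u)) := by
  refine ⟨⟨u, hu, rfl, le_rfl⟩, fun v ⟨u', _, hdu', hu'v⟩ hvu => le_antisymm hvu ?_⟩
  rw [← eq_of_le_of_degree_eq (hu'v.trans hvu) hdu']
  exact hu'v

lemma component_subset {n : ℕ} {I : Set (Mon n)} (hI : IsMonomialIdeal I) (d : ℕ) :
    component I d ⊆ I :=
  fun _ ⟨_, hu, _, hle⟩ => hI.mem_of_le hu hle

namespace ComponentwisePolymatroidal

variable {I : Set (Mon 2)}

lemma pair_mem_shift (hI : IsMonomialIdeal I) (hcp : ComponentwisePolymatroidal I)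
    {s t s' t' : ℕ} (hu : (![s, t] : Mon 2) ∈ I) (hv : (![s', t'] : Mon 2) ∈ I)
    (hdeg : s + t = s' + t') (hlt : s' < s) : (![s - 1, t + 1] : Mon 2) ∈ I := by
  have hdv : degree (![s', t'] : Mon 2) = degree ![s, t] := by
    rw [degree_pair, degree_pair, hdeg]
  obtain ⟨j, hj, hexch⟩ := (hcp _).2 _ (mem_minGens_component hu) _
    (hdv ▸ mem_minGens_component hv) 0 (by simpa using hlt)
  have hj1 : j = 1 := by
    fin_cases j
    · simp only [Fin.zero_eta, Fin.isValue, Matrix.cons_val_zero] at hj; omega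
    · rfl
  subst hj1
  have hexch_eq : exch (![s, t] : Mon 2) 0 1 = ![s - 1, t + 1] := by
    funext k
    fin_cases k <;> simp [exch]
  exact component_subset hI _ (hexch_eq ▸ hexch)

lemma pair_mem_shift_of_le (hI : IsMonomialIdeal I) (hcp : ComponentwisePolymatroidal I)
    {s t s' t' : ℕ} (hu : (![s, t] : Mon 2) ∈ I) (hv : (![s', t'] : Mon 2) ∈ I)
    (hdeg : s + t = s' + t') {k : ℕ} (hk : s' + k ≤ s) :
    (![s - k, t + k] : Mon 2) ∈ I := by
  induction k with
  | zero => simpa using hu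
  | succ k ih =>
    have h := pair_mem_shift hI hcp (ih (by omega)) hv (by omega) (by omega)
    rwa [Nat.sub_sub, add_assoc] at h

end ComponentwisePolymatroidal

section Generators

variable {I : Set (Mon 2)} {m : ℕ} {a b : ℕ → ℕ}

lemma pair_sub_one_notMem
    (horder : ∀ i k : ℕ, i ≤ m → k ≤ m → i < k → a k < a i ∧ b i < b k)
    (hgens : minGens I = {u | ∃ i ≤ m, u = ![a i, b i]})
    {q : ℕ} (hq0 : 0 < q) (hqm : q ≤ m) : (![a q, b q - 1] : Mon 2) ∉ I := by
  intro hmem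
  obtain ⟨u, hu, hle⟩ := exists_mem_minGens_le hmem
  rw [hgens] at hu
  obtain ⟨i, hi, rfl⟩ := hu
  have ha : a i ≤ a q := by simpa using hle 0
  have hb : b i ≤ b q - 1 := by simpa using hle 1
  have hb0 := (horder 0 q (Nat.zero_le _) hqm hq0).2
  rcases lt_trichotomy i q with h | rfl | h
  · have := (horder i q hi hqm h).1; omega
  · omega
  · have := (horder q i hqm hi h).2; omega

theorem ComponentwisePolymatroidal.not_degree_peak (hI : IsMonomialIdeal I)
    (hcp : ComponentwisePolymatroidal I)
    (horder : ∀ i k : ℕ, i ≤ m → k ≤ m → i < k → a k < a i ∧ b i < b k)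
    (hgens : minGens I = {u | ∃ i ≤ m, u = ![a i, b i]})
    {p q r : ℕ} (hpq : p < q) (hqr : q < r) (hrm : r ≤ m)
    (hp : a p + b p < a q + b q) (hr : a r + b r < a q + b q) : False := by
  set D := a q + b q - 1
  have hraise : ∀ i ≤ m, a i + b i ≤ D → (![a i, D - a i] : Mon 2) ∈ I := fun i hi hiD =>
    have hgen : (![a i, b i] : Mon 2) ∈ minGens I := hgens ▸ ⟨i, hi, rfl⟩
    hI.mem_of_le hgen.1 (pair_le_pair le_rfl (by omega))
  have hap := (horder p q (by omega) (by omega) hpq).1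
  have har := (horder q r (by omega) hrm hqr).1
  have hmem := hcp.pair_mem_shift_of_le hI (hraise p (by omega) (by omega))
    (hraise r hrm (by omega)) (k := a p - a q) (by omega) (by omega)
  have hpair : (![a p - (a p - a q), D - a p + (a p - a q)] : Mon 2) = ![a q, b q - 1] := by
    congr 2 <;> omega
  exact pair_sub_one_notMem horder hgens (by omega) (by omega) (hpair ▸ hmem)

end Generators

lemma exists_valley_of_forall_not_peak {α : Type*} [LinearOrder α] (d : ℕ → α) (m : ℕ)
    (hpeak : ∀ p q r : ℕ, p < q → q < r → r ≤ m → d p < d q → d r < d q → False) :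
    ∃ j ≤ m, (∀ i < j, d (i + 1) ≤ d i) ∧ (∀ i, j ≤ i → i < m → d i ≤ d (i + 1)) := by
  obtain ⟨j, hj, hmin⟩ := (Finset.range (m + 1)).exists_min_image d ⟨0, by simp⟩
  have hjmin : ∀ i ≤ m, d j ≤ d i := fun i hi => hmin i (by simpa [Nat.lt_succ_iff] using hi)
  have hjm : j ≤ m := by simpa [Nat.lt_succ_iff] using hj
  refine ⟨j, hjm, fun i hij => ?_, fun i hji him => ?_⟩
  · by_contra! h
    have hne : i + 1 ≠ j := fun he => (hjmin i (by omega)).not_gt (he ▸ h)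
    exact hpeak i (i + 1) j (by omega) (by omega) hjm h
      ((hjmin i (by omega)).trans_lt h)
  · by_contra! h
    have hne : j ≠ i := fun he => (hjmin (i + 1) (by omega)).not_gt (he ▸ h)
    exact hpeak j i (i + 1) (by omega) (by omega) (by omega)
      ((hjmin (i + 1) (by omega)).trans_lt h) h

/-- for a componentwise polymatroidal ideal in `K[x,y]` the degree sequence
`d i = deg u_i` of the minimal generators is valley-unimodal:
`d 0 ≥ ... ≥ d j ≤ ... ≤ d m` for some `j`. -/
theorem stmt_7 (I : Set (Mon 2)) (hI : IsMonomialIdeal I)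
    (hcp : ComponentwisePolymatroidal I)
    (m : ℕ) (a b : ℕ → ℕ)
    (horder : ∀ i k : ℕ, i ≤ m → k ≤ m → i < k → a k < a i ∧ b i < b k)
    (hgens : minGens I = {u | ∃ i ≤ m, u = ![a i, b i]}) :
    ∃ j ≤ m, (∀ i : ℕ, i < j → a (i+1) + b (i+1) ≤ a i + b i) ∧
             (∀ i : ℕ, j ≤ i → i < m → a i + b i ≤ a (i+1) + b (i+1)) :=
  exists_valley_of_forall_not_peak (fun i => a i + b i) m
    fun _ _ _ hpq hqr hrm => hcp.not_degree_peak hI horder hgens hpq hqr hrm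
end
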